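/- arXiv:0901.0826 — 2 statements merged into one kernel-verified Lean document; each statement's English description precedes it below -/
import Mathlib

section
/- Suppose φ satisfies Assumption (A) with s > d, fix z > 0, β > 0, a bounded measurable Λ ⊂ ℝ^d and a finite configuration η ⊂ Λ, and define R^Λ(η;z,β,a) = (z^{|η|}/Z_Λ(z,β)) · Σ_{n≥0} (z^n/n!) ∫_{Λ^n} exp(−β U(η∪{y₁,…,y_n})) · (1 − χ₋^a(η∪{y₁,…,y_n})) dy₁⋯dy_n (the part of the correlation integral coming from configurations with at least one cube of Δ̄_a containing two or more points). Then lim_{a→0} R^Λ(η;z,β,a) = 0. -/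
open MeasureTheory Filter Topology Set
open scoped BigOperators ENNReal NNReal

noncomputable section

attribute [local instance] Classical.propDecidable

/-- Points of `ℝ^d` (Euclidean space). -/
abbrev Pt (d : ℕ) : Type := EuclideanSpace ℝ (Fin d)

/-- The index `r ∈ ℤ^d` of the cube `Δ_a(r)` of the partition `Δ̄_a` containing `x`:
for `a > 0` we have `cubeIdx d a x = r ↔ ∀ i, a*(r i - 1/2) ≤ x i ∧ x i < a*(r i + 1/2)`. -/
def cubeIdx (d : ℕ) (a : ℝ) (x : Pt d) : Fin d → ℤ := fun i => ⌊x i / a + 1/2⌋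

/-- `φ⁺(t) = max {0, φ(t)}`. -/
def phiPlus (φ : ℝ → ℝ) (t : ℝ) : ℝ := max (φ t) 0

/-- `φ⁻(t) = -min {0, φ(t)}`. -/
def phiMinus (φ : ℝ → ℝ) (t : ℝ) : ℝ := max (-(φ t)) 0

/-- Energy `U(γ) = Σ_{{x,y}⊂γ} φ(|x-y|)` of a finite configuration. -/
def energy (d : ℕ) (φ : ℝ → ℝ) (γ : Finset (Pt d)) : ℝ :=
  (∑ p ∈ γ.offDiag, φ (dist p.1 p.2)) / 2

/-- Interaction energy `W(η;γ) = Σ_{x∈η} Σ_{y∈γ} φ(|x-y|)`. -/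
def interW (d : ℕ) (φ : ℝ → ℝ) (η γ : Finset (Pt d)) : ℝ :=
  ∑ x ∈ η, ∑ y ∈ γ, φ (dist x y)

/-- Number of points of `γ` in the cube `Δ_a(r)`, i.e. `|γ_Δ|`. -/
def cubeCount (d : ℕ) (a : ℝ) (γ : Finset (Pt d)) (r : Fin d → ℤ) : ℕ :=
  (γ.filter fun x => cubeIdx d a x = r).card

/-- `Σ_{Δ ∈ Δ̄_a : |γ_Δ| ≥ 2} |γ_Δ|²`. -/
def densSum (d : ℕ) (a : ℝ) (γ : Finset (Pt d)) : ℝ :=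
  ∑ r ∈ γ.image (cubeIdx d a),
    if 2 ≤ cubeCount d a γ r then (cubeCount d a γ r : ℝ) ^ 2 else 0

/-- `b(a) = inf {φ⁺(|x-y|) : x ≠ y lie in one common cube of Δ̄_a}`. -/
def bVal (d : ℕ) (φ : ℝ → ℝ) (a : ℝ) : ℝ :=
  sInf {t : ℝ | ∃ x y : Pt d, x ≠ y ∧ cubeIdx d a x = cubeIdx d a y ∧ t = phiPlus φ (dist x y)}

/-- `v₀(a) = Σ_{Δ'∈Δ̄_a} sup_{x∈Δ₀} sup_{y∈Δ'} φ⁻(|x-y|)` (valued in `ℝ≥0∞`). -/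
def v0E (d : ℕ) (φ : ℝ → ℝ) (a : ℝ) : ℝ≥0∞ :=
  ∑' r : Fin d → ℤ,
    ⨆ x ∈ {x : Pt d | cubeIdx d a x = 0}, ⨆ y ∈ {y : Pt d | cubeIdx d a y = r},
      ENNReal.ofReal (phiMinus φ (dist x y))

/-- Real value of `v₀(a)`. -/
def v0Val (d : ℕ) (φ : ℝ → ℝ) (a : ℝ) : ℝ := (v0E d φ a).toReal

/-- Assumption (A) on the interaction potential. -/
structure AssumptionA (d : ℕ) (φ : ℝ → ℝ) (r₀ R φ₀ φ₁ ε₀ s : ℝ) : Prop where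
  cont : ContinuousOn φ (Set.Ioi (0 : ℝ))
  r0_pos : 0 < r₀
  R_gt : r₀ < R
  phi0_pos : 0 < φ₀
  phi1_pos : 0 < φ₁
  eps0_pos : 0 < ε₀
  s_ge : (d : ℝ) ≤ s
  decay : ∀ t : ℝ, R ≤ t → -(φ₁ / t ^ ((d : ℝ) + ε₀)) ≤ φ t
  core : ∀ t : ℝ, 0 < t → t ≤ r₀ → φ₀ / t ^ s ≤ φ t

/-- `χ₋^a(γ) = 1` iff no cube of `Δ̄_a` contains two or more points of `γ`. -/
def chiM (d : ℕ) (a : ℝ) (γ : Finset (Pt d)) : ℝ :=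
  if ∀ x ∈ γ, ∀ y ∈ γ, cubeIdx d a x = cubeIdx d a y → x = y then 1 else 0

/-- The finite configuration `{y₁,…,y_n}`. -/
def confOf {d n : ℕ} (y : Fin n → Pt d) : Finset (Pt d) := Finset.image y Finset.univ

/-- Weighted grand partition function `1 + Σ_{n≥1} (zⁿ/n!) ∫_{Λⁿ} e^{-βU({x₁,…,xₙ})} w({x₁,…,xₙ})`. -/
def ZW (d : ℕ) (φ : ℝ → ℝ) (z β : ℝ) (Λ : Set (Pt d)) (w : Finset (Pt d) → ℝ) : ℝ :=
  1 + ∑' n : ℕ, (z ^ (n + 1) / (n + 1).factorial) *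
    ∫ y in {y : Fin (n + 1) → Pt d | ∀ i, y i ∈ Λ},
      Real.exp (-β * energy d φ (confOf y)) * w (confOf y)

/-- Grand partition function `Z_Λ(z,β)`. -/
def ZΛ (d : ℕ) (φ : ℝ → ℝ) (z β : ℝ) (Λ : Set (Pt d)) : ℝ := ZW d φ z β Λ fun _ => 1

/-- Dilute (quasi-lattice approximated) partition function `Z_Λ^{(-)}(z,β,a)`. -/
def ZΛm (d : ℕ) (φ : ℝ → ℝ) (z β a : ℝ) (Λ : Set (Pt d)) : ℝ := ZW d φ z β Λ (chiM d a)

/-- `Σ_{n≥0} (zⁿ/n!) ∫_{Λⁿ} e^{-βU(η∪{y₁,…,y_n})} w(η∪{y₁,…,y_n})`. -/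
def corrInt (d : ℕ) (φ : ℝ → ℝ) (z β : ℝ) (Λ : Set (Pt d)) (η : Finset (Pt d))
    (w : Finset (Pt d) → ℝ) : ℝ :=
  Real.exp (-β * energy d φ η) * w η +
  ∑' n : ℕ, (z ^ (n + 1) / (n + 1).factorial) *
    ∫ y in {y : Fin (n + 1) → Pt d | ∀ i, y i ∈ Λ},
      Real.exp (-β * energy d φ (η ∪ confOf y)) * w (η ∪ confOf y)

/-- Finite-volume correlation function `ρ_Λ(η;z,β)`. -/
def rhoΛ (d : ℕ) (φ : ℝ → ℝ) (z β : ℝ) (Λ : Set (Pt d)) (η : Finset (Pt d)) : ℝ :=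
  z ^ η.card / ZΛ d φ z β Λ * corrInt d φ z β Λ η fun _ => 1

/-- Approximated correlation function `ρ_Λ^{(-)}(η;z,β,a)`. -/
def rhoΛm (d : ℕ) (φ : ℝ → ℝ) (z β a : ℝ) (Λ : Set (Pt d)) (η : Finset (Pt d)) : ℝ :=
  z ^ η.card / ZΛm d φ z β a Λ * corrInt d φ z β Λ η (chiM d a)

/-- `ε₁(a)`. -/
def eps1 (d : ℕ) (φ : ℝ → ℝ) (z β a : ℝ) : ℝ :=
  1/2 * z^2 * a^(2*d) * Real.exp (-β * (bVal d φ a - 5 * v0Val d φ a)) *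
    Real.exp (z * a^d * Real.exp (-β * (bVal d φ a - 3 * v0Val d φ a)))

/-- The cube `[-L/2, L/2)^d`. -/
def boxHalf (d : ℕ) (L : ℝ) : Set (Pt d) := {x | ∀ i, -(L/2) ≤ x i ∧ x i < L/2}

/-- The cube `Λ_l = [-a(l+1/2), a(l+1/2))^d`, a union of cubes of `Δ̄_a`. -/
def boxLat (d : ℕ) (a : ℝ) (l : ℕ) : Set (Pt d) :=
  {x | ∀ i, -(a*(l+1/2)) ≤ x i ∧ x i < a*(l+1/2)}

/-!
Cut space into cubes of side `δ`. Two points of one cube repel each other with at least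
`φ₀ / (δ √d) ^ s`, every other pair inside a ball of radius `M` costs at least `-C`, and there are
only about `(2M / δ) ^ d` cubes meeting the ball; as `s > d`, a small `δ` makes the repulsion win,
which gives stability `U(γ) ≥ -B |γ|` for configurations in the bounded set `Λ ∪ η`. Hence the
`n`-th term of the series for `R^Λ` is dominated by `e^{βB|η|} (|z| e^{βB} |Λ|)^n / n!`, uniformly
in `a`. For a fixed configuration, `χ₋^a = 1` as soon as `a √d` is below its smallest distance, so
every integrand tends to `0` pointwise, and dominated convergence, first in each integral and then
in the series, gives the limit `0`.
-/

open Finset Function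

section Cubes

variable {d : ℕ}

lemma abs_sub_lt_of_cubeIdx_eq {a : ℝ} (ha : 0 < a) {x y : Pt d}
    (h : cubeIdx d a x = cubeIdx d a y) (i : Fin d) : |x i - y i| < a := by
  have hfl := Int.abs_sub_lt_one_of_floor_eq_floor (congrFun h i)
  rwa [show x i / a + 1 / 2 - (y i / a + 1 / 2) = (x i - y i) / a by ring, abs_div,
    abs_of_pos ha, div_lt_one ha] at hfl

lemma dist_le_of_cubeIdx_eq {a : ℝ} (ha : 0 < a) {x y : Pt d}
    (h : cubeIdx d a x = cubeIdx d a y) : dist x y ≤ a * √d := by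
  have hsum : ∑ i, dist (x i) (y i) ^ 2 ≤ ∑ _i : Fin d, a ^ 2 :=
    sum_le_sum fun i _ => by
      rw [Real.dist_eq]
      exact pow_le_pow_left₀ (abs_nonneg _) (abs_sub_lt_of_cubeIdx_eq ha h i).le 2
  calc dist x y = √(∑ i, dist (x i) (y i) ^ 2) := EuclideanSpace.dist_eq x y
    _ ≤ √(∑ _i : Fin d, a ^ 2) := Real.sqrt_le_sqrt hsum
    _ = a * √d := by
      rw [sum_const, card_univ, Fintype.card_fin, nsmul_eq_mul, Real.sqrt_mul (Nat.cast_nonneg d),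
        Real.sqrt_sq ha.le, mul_comm]

lemma chiM_eventually_eq_one (γ : Finset (Pt d)) : ∀ᶠ a in 𝓝[>] (0 : ℝ), chiM d a γ = 1 := by
  have hside : Tendsto (fun a : ℝ => a * √d) (𝓝[>] 0) (𝓝 0) := by
    simpa using (tendsto_id.mul_const √d).mono_left (nhdsWithin_le_nhds (a := (0 : ℝ)))
  have hsmall : ∀ p ∈ γ.offDiag, ∀ᶠ a in 𝓝[>] (0 : ℝ), a * √d < dist p.1 p.2 := fun p hp =>
    hside.eventually_lt_const (dist_pos.2 (mem_offDiag.1 hp).2.2)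
  filter_upwards [self_mem_nhdsWithin, (eventually_all_finset _).2 hsmall] with a ha hlt
  rw [chiM, if_pos]
  intro x hx y hy hxy
  by_contra hne
  exact (hlt (x, y) (mem_offDiag.2 ⟨hx, hy, hne⟩)).not_ge (dist_le_of_cubeIdx_eq ha hxy)

lemma card_image_cubeIdx_le {δ M : ℝ} (hδ : 0 < δ) (hM : 0 ≤ M) {γ : Finset (Pt d)}
    (hγ : ∀ x ∈ γ, ‖x‖ ≤ M) : ((γ.image (cubeIdx d δ)).card : ℝ) ≤ (2 * M / δ + 2) ^ d := by
  set lo : ℤ := ⌊-M / δ + 1 / 2⌋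
  set hi : ℤ := ⌊M / δ + 1 / 2⌋
  have hsub : γ.image (cubeIdx d δ) ⊆ Fintype.piFinset fun _ => Finset.Icc lo hi := by
    intro k hk
    obtain ⟨x, hx, rfl⟩ := mem_image.1 hk
    have hxi := fun i => abs_le.1 ((PiLp.norm_apply_le x i).trans (hγ x hx))
    refine Fintype.mem_piFinset.2 fun i => mem_Icc.2 ⟨?_, ?_⟩ <;> apply Int.floor_le_floor <;>
      gcongr
    exacts [(hxi i).1, (hxi i).2]
  have hIcc : ((Finset.Icc lo hi).card : ℝ) ≤ 2 * M / δ + 2 := by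
    have hlo : -M / δ + 1 / 2 - 1 < lo := Int.sub_one_lt_floor _
    have hhi : (hi : ℝ) ≤ M / δ + 1 / 2 := Int.floor_le _
    have hcast : ((Finset.Icc lo hi).card : ℝ) = ((max (hi + 1 - lo) 0 : ℤ) : ℝ) := by
      rw [Int.card_Icc, ← Int.toNat_eq_max]; rfl
    rw [hcast, Int.cast_max, Int.cast_zero]
    refine max_le ?_ (by positivity)
    push_cast
    have : -M / δ = -(M / δ) := neg_div _ _
    linarith [show 2 * M / δ = 2 * (M / δ) by ring]
  calc ((γ.image (cubeIdx d δ)).card : ℝ)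
      ≤ (Fintype.piFinset fun (_ : Fin d) => Finset.Icc lo hi).card := by
        exact_mod_cast Finset.card_le_card hsub
    _ = ((Finset.Icc lo hi).card : ℝ) ^ d := by simp [Fintype.card_piFinset]
    _ ≤ (2 * M / δ + 2) ^ d := pow_le_pow_left₀ (Nat.cast_nonneg _) hIcc d

lemma measurable_cubeIdx (a : ℝ) : Measurable (cubeIdx d a) :=
  measurable_pi_lambda _ fun _ => Int.measurable_floor.comp (by fun_prop)

end Cubes

section Stability

lemma sq_card_le_card_image_mul_card_filter {α ι : Type*} [DecidableEq ι] (idx : α → ι)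
    (γ : Finset α) :
    (γ.card : ℝ) ^ 2 ≤
      (γ.image idx).card * ((γ ×ˢ γ).filter fun p => idx p.1 = idx p.2).card := by
  set T := γ.image idx
  set n : ι → ℕ := fun k => (γ.filter fun x => idx x = k).card
  have hN : γ.card = ∑ k ∈ T, n k :=
    card_eq_sum_card_fiberwise fun x hx => mem_image_of_mem idx hx
  have hP : ((γ ×ˢ γ).filter fun p => idx p.1 = idx p.2).card = ∑ k ∈ T, n k ^ 2 := by
    rw [card_eq_sum_card_fiberwise (f := fun p => idx p.1) (t := T) fun p hp =>
      mem_image_of_mem idx (mem_product.1 (mem_filter.1 hp).1).1]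
    refine sum_congr rfl fun k _ => ?_
    rw [sq, ← card_product]
    congr 1
    ext p
    simp only [mem_filter, mem_product]
    constructor
    · rintro ⟨⟨⟨h1, h2⟩, h12⟩, rfl⟩
      exact ⟨⟨h1, rfl⟩, h2, h12.symm⟩
    · rintro ⟨⟨h1, rfl⟩, h2, h12⟩
      exact ⟨⟨⟨h1, h2⟩, h12.symm⟩, rfl⟩
  rw [hN, hP]
  push_cast
  exact sq_sum_le_card_mul_sum_sq

/-- Cauchy–Schwarz over the fibres of `idx` gives at least `|γ|² / |T|` pairs in a common fibre,
so once `C |T| ≤ A` their repulsion pays for all other pairs. -/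
lemma neg_mul_card_le_sum_offDiag {α ι : Type*} [DecidableEq α] [DecidableEq ι] (idx : α → ι)
    (f : α → α → ℝ) (γ : Finset α) {A C : ℝ} (hC : 0 ≤ C)
    (hsame : ∀ x ∈ γ, ∀ y ∈ γ, x ≠ y → idx x = idx y → A ≤ f x y)
    (hdiff : ∀ x ∈ γ, ∀ y ∈ γ, x ≠ y → -C ≤ f x y)
    (hAC : C * (γ.image idx).card ≤ A) :
    -(A * γ.card) ≤ ∑ p ∈ γ.offDiag, f p.1 p.2 := by
  set g : α × α → ℝ := fun p => A * (if idx p.1 = idx p.2 then 1 else 0) - C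
  set P : ℝ := ((((γ ×ˢ γ).filter fun p => idx p.1 = idx p.2).card : ℕ) : ℝ)
  have hg : ∀ p ∈ γ.offDiag, g p ≤ f p.1 p.2 := by
    rintro ⟨x, y⟩ hp
    obtain ⟨hx, hy, hxy⟩ := mem_offDiag.1 hp
    by_cases h : idx x = idx y
    · simp only [g, h, if_true, mul_one]
      linarith [hsame x hx y hy hxy h]
    · simpa [g, h] using hdiff x hx y hy hxy
  have hall : ∑ p ∈ γ ×ˢ γ, g p = A * P - C * γ.card ^ 2 := by
    simp only [g, sum_sub_distrib, ← mul_sum, sum_boole, sum_const, card_product, P]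
    ring
  have hdiag : ∑ p ∈ γ.diag, g p = (A - C) * γ.card := by
    rw [sum_congr rfl (g := fun _ => A - C) fun p hp => by simp [g, (mem_diag.1 hp).2],
      sum_const, diag_card, nsmul_eq_mul, mul_comm]
  have hsplit : ∑ p ∈ γ ×ˢ γ, g p = ∑ p ∈ γ.diag, g p + ∑ p ∈ γ.offDiag, g p := by
    rw [← diag_union_offDiag, sum_union (disjoint_diag_offDiag γ)]
  have hCS : C * γ.card ^ 2 ≤ A * P :=
    calc C * γ.card ^ 2 ≤ C * ((γ.image idx).card * P) :=
          mul_le_mul_of_nonneg_left (sq_card_le_card_image_mul_card_filter idx γ) hC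
      _ ≤ A * P := by rw [← mul_assoc]; exact mul_le_mul_of_nonneg_right hAC (Nat.cast_nonneg _)
  have hC' : 0 ≤ C * γ.card := mul_nonneg hC (Nat.cast_nonneg _)
  linarith [sum_le_sum hg]

lemma AssumptionA.exists_neg_le {d : ℕ} {φ : ℝ → ℝ} {r₀ R φ₀ φ₁ ε₀ s : ℝ}
    (hA : AssumptionA d φ r₀ R φ₀ φ₁ ε₀ s) (L : ℝ) :
    ∃ C, 0 ≤ C ∧ ∀ t, 0 < t → t ≤ L → -C ≤ φ t := by
  obtain ⟨c, hc⟩ := isCompact_Icc.bddBelow_image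
    (hA.cont.mono fun t ht => hA.r0_pos.trans_le ht.1 : ContinuousOn φ (Set.Icc r₀ L))
  refine ⟨max 0 (-c), le_max_left _ _, fun t ht htL => ?_⟩
  rcases le_or_gt t r₀ with htr | htr
  · have hcore := hA.core t ht htr
    have hpos : 0 < φ₀ / t ^ s := div_pos hA.phi0_pos (Real.rpow_pos_of_pos ht s)
    linarith [le_max_left 0 (-c)]
  · have hct : c ≤ φ t := hc ⟨t, ⟨htr.le, htL⟩, rfl⟩
    linarith [le_max_right 0 (-c)]

/-- Because `s > d`, the core repulsion `φ₀ / (δ √d) ^ s` inside a cube of side `δ` outgrows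
the number `≈ (2M / δ) ^ d` of cubes meeting a ball of radius `M`. -/
lemma exists_cubeSide {d : ℕ} (hd : 1 ≤ d) {s φ₀ r₀ C M : ℝ} (hs : (d : ℝ) < s) (hφ₀ : 0 < φ₀)
    (hr₀ : 0 < r₀) :
    ∃ δ > 0, δ * √d ≤ r₀ ∧ C * (2 * M / δ + 2) ^ d ≤ φ₀ / (δ * √d) ^ s := by
  set g : ℝ → ℝ := fun δ => C * (2 * M + 2 * δ) ^ d * √d ^ s * δ ^ (s - d)
  have hg : Tendsto g (𝓝 0) (𝓝 0) := by
    have hcont : ContinuousAt g 0 :=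
      (continuousAt_const.mul ((continuousAt_const.add (continuousAt_const.mul continuousAt_id)).pow
        d)).mul continuousAt_const |>.mul (Real.continuousAt_rpow_const _ _ (Or.inr (by linarith)))
    simpa [g, Real.zero_rpow (sub_pos.2 hs).ne'] using hcont.tendsto
  have hside : Tendsto (fun δ : ℝ => δ * √d) (𝓝 0) (𝓝 0) := by
    simpa using (tendsto_id (x := 𝓝 (0 : ℝ))).mul_const √d
  have hsmall : ∀ᶠ δ in 𝓝[>] (0 : ℝ), 0 < δ ∧ g δ < φ₀ ∧ δ * √d < r₀ := by
    filter_upwards [self_mem_nhdsWithin, nhdsWithin_le_nhds (hg.eventually_lt_const hφ₀),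
      nhdsWithin_le_nhds (hside.eventually_lt_const hr₀)] with δ h1 h2 h3 using ⟨h1, h2, h3⟩
  obtain ⟨δ, hδ, hgδ, hδr⟩ := hsmall.exists
  have hd0 : 0 < √d := Real.sqrt_pos.2 (by exact_mod_cast hd)
  refine ⟨δ, hδ, hδr.le, ?_⟩
  have hrpow : δ ^ s = δ ^ (s - d) * δ ^ d := by
    rw [← Real.rpow_natCast, ← Real.rpow_add hδ]; ring_nf
  rw [le_div_iff₀ (Real.rpow_pos_of_pos (mul_pos hδ hd0) s)]
  convert hgδ.le using 1
  have hlin : (2 * M / δ + 2) * δ = 2 * M + 2 * δ := by field_simp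
  simp only [g]
  rw [Real.mul_rpow hδ.le hd0.le, hrpow, ← hlin, mul_pow]
  ring

theorem AssumptionA.energy_stable {d : ℕ} (hd : 1 ≤ d) {φ : ℝ → ℝ} {r₀ R φ₀ φ₁ ε₀ s : ℝ}
    (hA : AssumptionA d φ r₀ R φ₀ φ₁ ε₀ s) (hs : (d : ℝ) < s) {K : Set (Pt d)}
    (hK : Bornology.IsBounded K) :
    ∃ B, 0 ≤ B ∧ ∀ γ : Finset (Pt d), ↑γ ⊆ K → -(B * γ.card) ≤ energy d φ γ := by
  obtain ⟨M, hM, hKM⟩ := hK.subset_closedBall_lt 0 0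
  obtain ⟨C, hC, hφC⟩ := hA.exists_neg_le (2 * M)
  obtain ⟨δ, hδ, hδr₀, hδC⟩ := exists_cubeSide (C := C) (M := M) hd hs hA.phi0_pos hA.r0_pos
  set A := φ₀ / (δ * √d) ^ s
  have hA0 : 0 ≤ A := div_nonneg hA.phi0_pos.le (Real.rpow_nonneg (by positivity) s)
  refine ⟨A / 2, div_nonneg hA0 zero_le_two, fun γ hγ => ?_⟩
  have hnorm : ∀ x ∈ γ, ‖x‖ ≤ M := fun x hx => by simpa using hKM (hγ hx)
  have hsame : ∀ x ∈ γ, ∀ y ∈ γ, x ≠ y → cubeIdx d δ x = cubeIdx d δ y → A ≤ φ (dist x y) := by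
    intro x _ y _ hxy hcube
    have hpos : 0 < dist x y := dist_pos.2 hxy
    have hle : dist x y ≤ δ * √d := dist_le_of_cubeIdx_eq hδ hcube
    calc A ≤ φ₀ / dist x y ^ s := div_le_div_of_nonneg_left hA.phi0_pos.le
          (Real.rpow_pos_of_pos hpos s) (Real.rpow_le_rpow hpos.le hle (by linarith [hA.s_ge]))
      _ ≤ φ (dist x y) := hA.core _ hpos (hle.trans hδr₀)
  have hdiff : ∀ x ∈ γ, ∀ y ∈ γ, x ≠ y → -C ≤ φ (dist x y) := fun x hx y hy hxy =>
    hφC _ (dist_pos.2 hxy) (by linarith [dist_le_norm_add_norm x y, hnorm x hx, hnorm y hy])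
  have hAC : C * (γ.image (cubeIdx d δ)).card ≤ A :=
    (mul_le_mul_of_nonneg_left (card_image_cubeIdx_le hδ hM.le hnorm) hC).trans hδC
  have hsum :=
    neg_mul_card_le_sum_offDiag (cubeIdx d δ) (fun x y => φ (dist x y)) γ hC hsame hdiff hAC
  rw [energy]
  linarith

end Stability

section Measurability

variable {d m : ℕ}

lemma union_confOf_eq_image (η : Finset (Pt d)) (y : Fin m → Pt d) :
    η ∪ confOf y = Finset.univ.image (Sum.elim y ((↑) : η → Pt d)) := by
  ext x
  simp only [confOf, Finset.mem_union, Finset.mem_image, Finset.mem_univ, true_and, Sum.exists,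
    Sum.elim_inl, Sum.elim_inr, Subtype.exists, exists_prop, exists_eq_right]
  tauto

lemma energy_image_of_injective (φ : ℝ → ℝ) {ι : Type*} [Fintype ι] [DecidableEq ι]
    {f : ι → Pt d} (hf : Injective f) :
    energy d φ (Finset.univ.image f) =
      (∑ p ∈ (Finset.univ : Finset ι).offDiag, φ (dist (f p.1) (f p.2))) / 2 := by
  have hoff : (Finset.univ.image f).offDiag =
      (Finset.univ : Finset ι).offDiag.image (Prod.map f f) := by
    ext ⟨x, y⟩
    simp only [Finset.mem_offDiag, Finset.mem_image, Finset.mem_univ, true_and, Prod.exists,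
      Prod.map, Prod.mk.injEq]
    constructor
    · rintro ⟨⟨i, rfl⟩, ⟨j, rfl⟩, hij⟩
      exact ⟨i, j, fun h => hij (h ▸ rfl), rfl, rfl⟩
    · rintro ⟨i, j, hij, rfl, rfl⟩
      exact ⟨⟨i, rfl⟩, ⟨j, rfl⟩, hf.ne hij⟩
  rw [energy, hoff, Finset.sum_image (hf.prodMap hf).injOn]
  rfl

lemma ae_injective_sumElim (hd : 1 ≤ d) (η : Finset (Pt d)) :
    ∀ᵐ y : Fin m → Pt d, Injective (Sum.elim y ((↑) : η → Pt d)) := by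
  have : Nonempty (Fin d) := ⟨⟨0, hd⟩⟩
  obtain ⟨v, hv⟩ := exists_ne (0 : Pt d)
  have hdiag : ∀ i j : Fin m, ∀ᵐ y : Fin m → Pt d, i ≠ j → y i ≠ y j := by
    intro i j
    by_cases hij : i = j
    · exact Eventually.of_forall fun _ h => absurd hij h
    have hker : LinearMap.ker ((LinearMap.proj i : (Fin m → Pt d) →ₗ[ℝ] Pt d) - LinearMap.proj j)
        ≠ ⊤ := fun htop => hv <| by
      have h := LinearMap.congr_fun (LinearMap.ker_eq_top.1 htop) (Pi.single i v)
      simpa [Ne.symm hij] using h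
    have hnull := Measure.addHaar_submodule volume _ hker
    simp only [ae_iff, Classical.not_imp, not_not]
    refine measure_mono_null (fun y hy => ?_) hnull
    simpa [sub_eq_zero] using hy.2
  have hpt : ∀ (i : Fin m) (x : Pt d), ∀ᵐ y : Fin m → Pt d, y i ≠ x := fun i x => by
    have h : volume (eval i ⁻¹' {x} : Set (Fin m → Pt d)) = 0 :=
      Measure.pi_eval_preimage_null (fun _ => volume) (measure_singleton x)
    simp only [ae_iff, ne_eq, not_not]
    exact h
  filter_upwards [ae_all_iff.2 fun i => ae_all_iff.2 (hdiag i),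
    ae_all_iff.2 fun i => ae_all_iff.2 fun x : η => hpt i x] with y hy hyη
  refine Injective.sumElim (fun i j h => ?_) Subtype.val_injective fun i x => hyη i x
  by_contra hij
  exact hy i j hij h

lemma continuous_sumElim_apply (η : Finset (Pt d)) (k : Fin m ⊕ η) :
    Continuous fun y : Fin m → Pt d => Sum.elim y ((↑) : η → Pt d) k := by
  cases k with
  | inl i => exact continuous_apply i
  | inr x => exact continuous_const

lemma aemeasurable_energy_union_confOf (hd : 1 ≤ d) {φ : ℝ → ℝ}
    (hφ : ContinuousOn φ (Set.Ioi 0)) (η : Finset (Pt d)) :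
    AEMeasurable (fun y : Fin m → Pt d => energy d φ (η ∪ confOf y)) := by
  have hφabs : Measurable fun t => φ |t| := measurable_of_continuousOn_compl_singleton 0
    (hφ.comp continuous_abs.continuousOn fun _ ht => abs_pos.2 ht)
  refine ⟨fun y => (∑ p ∈ (Finset.univ : Finset (Fin m ⊕ η)).offDiag,
    φ (dist (Sum.elim y (↑) p.1) (Sum.elim y (↑) p.2))) / 2, ?_, ?_⟩
  · refine (Finset.measurable_sum _ fun p _ => ?_).div_const 2
    have hmeas := hφabs.comp
      ((continuous_sumElim_apply η p.1).dist (continuous_sumElim_apply η p.2)).measurable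
    simpa only [Function.comp_def, abs_dist] using hmeas
  · filter_upwards [ae_injective_sumElim hd η] with y hy
    rw [union_confOf_eq_image, energy_image_of_injective φ hy]

lemma measurable_chiM_union_confOf (a : ℝ) (η : Finset (Pt d)) :
    Measurable fun y : Fin m → Pt d => chiM d a (η ∪ confOf y) := by
  simp only [chiM, union_confOf_eq_image, Finset.forall_mem_image, Finset.mem_univ, true_implies]
  refine Measurable.ite ?_ measurable_const measurable_const
  refine measurableSet_setOfPred.2 (Measurable.forall fun k => Measurable.forall fun l => ?_)
  have hk := continuous_sumElim_apply (m := m) η k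
  have hl := continuous_sumElim_apply (m := m) η l
  exact Measurable.imp
    (measurableSet_setOfPred.1 (measurableSet_eq_fun ((measurable_cubeIdx a).comp hk.measurable)
      ((measurable_cubeIdx a).comp hl.measurable)))
    (measurableSet_setOfPred.1 (measurableSet_eq_fun hk.measurable hl.measurable))

end Measurability

section Remainder

variable {d m : ℕ} {φ : ℝ → ℝ} {β : ℝ}

def remainderIntegrand (d : ℕ) (φ : ℝ → ℝ) (β a : ℝ) (η : Finset (Pt d)) (y : Fin m → Pt d) :
    ℝ :=
  Real.exp (-β * energy d φ (η ∪ confOf y)) * (1 - chiM d a (η ∪ confOf y))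

lemma norm_exp_mul_one_sub_chiM_le (hβ : 0 ≤ β) {B N : ℝ} (hB : 0 ≤ B) {γ : Finset (Pt d)}
    (hU : -(B * γ.card) ≤ energy d φ γ) (hN : (γ.card : ℝ) ≤ N) (a : ℝ) :
    ‖Real.exp (-β * energy d φ γ) * (1 - chiM d a γ)‖ ≤ Real.exp (β * B * N) := by
  have hχ : ‖1 - chiM d a γ‖ ≤ 1 := by unfold chiM; split_ifs <;> norm_num
  rw [norm_mul, Real.norm_of_nonneg (Real.exp_pos _).le]
  calc Real.exp (-β * energy d φ γ) * ‖1 - chiM d a γ‖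
      ≤ Real.exp (-β * energy d φ γ) := mul_le_of_le_one_right (Real.exp_pos _).le hχ
    _ ≤ Real.exp (β * B * N) := by
      rw [Real.exp_le_exp]
      nlinarith [mul_le_mul_of_nonneg_left hU hβ, mul_le_mul_of_nonneg_left hN (mul_nonneg hβ hB)]

lemma setOf_forall_mem_eq_pi {α : Type*} (Λ : Set α) :
    {y : Fin m → α | ∀ i, y i ∈ Λ} = Set.univ.pi fun _ => Λ := by
  ext y
  simp

lemma ae_norm_remainderIntegrand_le (hβ : 0 ≤ β) {B : ℝ} (hB : 0 ≤ B) {Λ : Set (Pt d)}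
    (hΛ : MeasurableSet Λ) {η : Finset (Pt d)}
    (hstab : ∀ γ : Finset (Pt d), ↑γ ⊆ Λ ∪ ↑η → -(B * γ.card) ≤ energy d φ γ) (a : ℝ) :
    ∀ᵐ y ∂volume.restrict {y : Fin m → Pt d | ∀ i, y i ∈ Λ},
      ‖remainderIntegrand d φ β a η y‖ ≤ Real.exp (β * B * (η.card + m)) := by
  have hS : MeasurableSet {y : Fin m → Pt d | ∀ i, y i ∈ Λ} := by
    rw [setOf_forall_mem_eq_pi]
    exact MeasurableSet.univ_pi fun _ => hΛ
  filter_upwards [ae_restrict_mem hS] with y hy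
  refine norm_exp_mul_one_sub_chiM_le hβ hB (hstab _ fun x hx => ?_) ?_ a
  · rcases Finset.mem_union.1 hx with hxη | hxy
    · exact Or.inr hxη
    · obtain ⟨i, -, rfl⟩ := Finset.mem_image.1 hxy
      exact Or.inl (hy i)
  · have hcard : (confOf y).card ≤ m := Finset.card_image_le.trans (by simp)
    exact_mod_cast (Finset.card_union_le η _).trans (Nat.add_le_add_left hcard _)

lemma volume_setOf_forall_mem (Λ : Set (Pt d)) :
    volume {y : Fin m → Pt d | ∀ i, y i ∈ Λ} = volume Λ ^ m := by
  rw [setOf_forall_mem_eq_pi, volume_pi_pi, Finset.prod_const, Finset.card_univ,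
    Fintype.card_fin]

lemma volume_setOf_forall_mem_ne_top {Λ : Set (Pt d)} (hΛb : Bornology.IsBounded Λ) :
    volume {y : Fin m → Pt d | ∀ i, y i ∈ Λ} ≠ ⊤ := by
  rw [volume_setOf_forall_mem]
  exact ENNReal.pow_ne_top hΛb.measure_lt_top.ne

lemma tendsto_setIntegral_remainderIntegrand (hd : 1 ≤ d) (hφ : ContinuousOn φ (Set.Ioi 0))
    (hβ : 0 ≤ β) {B : ℝ} (hB : 0 ≤ B) {Λ : Set (Pt d)} (hΛb : Bornology.IsBounded Λ)
    (hΛm : MeasurableSet Λ) {η : Finset (Pt d)}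
    (hstab : ∀ γ : Finset (Pt d), ↑γ ⊆ Λ ∪ ↑η → -(B * γ.card) ≤ energy d φ γ) :
    Tendsto (fun a => ∫ y in {y : Fin m → Pt d | ∀ i, y i ∈ Λ}, remainderIntegrand d φ β a η y)
      (𝓝[>] 0) (𝓝 0) := by
  have := isFiniteMeasure_restrict.2 (volume_setOf_forall_mem_ne_top (m := m) hΛb)
  have hmeas (a : ℝ) : AEStronglyMeasurable (remainderIntegrand (m := m) d φ β a η) volume :=
    (((aemeasurable_energy_union_confOf hd hφ η).const_mul (-β)).exp.mul
      (measurable_const.sub (measurable_chiM_union_confOf a η)).aemeasurable).aestronglyMeasurable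
  have hlim (y : Fin m → Pt d) :
      Tendsto (fun a => remainderIntegrand d φ β a η y) (𝓝[>] 0) (𝓝 0) :=
    tendsto_const_nhds.congr' <| (chiM_eventually_eq_one (η ∪ confOf y)).mono fun a ha => by
      simp [remainderIntegrand, ha]
  simpa using tendsto_integral_filter_of_dominated_convergence _
    (Eventually.of_forall fun a => (hmeas a).restrict)
    (Eventually.of_forall (ae_norm_remainderIntegrand_le hβ hB hΛm hstab))
    (integrable_const _) (Eventually.of_forall hlim)

lemma norm_setIntegral_remainderIntegrand_le (hβ : 0 ≤ β) {B : ℝ} (hB : 0 ≤ B)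
    {Λ : Set (Pt d)} (hΛb : Bornology.IsBounded Λ) (hΛm : MeasurableSet Λ) {η : Finset (Pt d)}
    (hstab : ∀ γ : Finset (Pt d), ↑γ ⊆ Λ ∪ ↑η → -(B * γ.card) ≤ energy d φ γ) (a : ℝ) :
    ‖∫ y in {y : Fin m → Pt d | ∀ i, y i ∈ Λ}, remainderIntegrand d φ β a η y‖ ≤
      Real.exp (β * B * (η.card + m)) * volume.real Λ ^ m := by
  have := isFiniteMeasure_restrict.2 (volume_setOf_forall_mem_ne_top (m := m) hΛb)
  have h :=
    norm_integral_le_of_norm_le_const (ae_norm_remainderIntegrand_le (m := m) hβ hB hΛm hstab a)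
  rwa [measureReal_restrict_apply_univ, measureReal_def, volume_setOf_forall_mem,
    ENNReal.toReal_pow, ← measureReal_def] at h

end Remainder

theorem tendsto_corrInt_one_sub_chiM {d : ℕ} (hd : 1 ≤ d) {φ : ℝ → ℝ} {r₀ R φ₀ φ₁ ε₀ s : ℝ}
    (hA : AssumptionA d φ r₀ R φ₀ φ₁ ε₀ s) (hs : (d : ℝ) < s) (z : ℝ) {β : ℝ} (hβ : 0 < β)
    {Λ : Set (Pt d)} (hΛb : Bornology.IsBounded Λ) (hΛm : MeasurableSet Λ) (η : Finset (Pt d)) :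
    Tendsto (fun a => corrInt d φ z β Λ η fun γ => 1 - chiM d a γ) (𝓝[>] 0) (𝓝 0) := by
  obtain ⟨B, hB, hstab⟩ := hA.energy_stable hd hs (hΛb.union η.finite_toSet.isBounded)
  set x := |z| * Real.exp (β * B) * volume.real Λ
  have hfirst : Tendsto (fun a => Real.exp (-β * energy d φ η) * (1 - chiM d a η))
      (𝓝[>] 0) (𝓝 0) :=
    tendsto_const_nhds.congr' <| (chiM_eventually_eq_one η).mono fun a ha => by simp [ha]
  have hbound (a : ℝ) (n : ℕ) :
      ‖z ^ (n + 1) / (n + 1).factorial *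
          ∫ y in {y : Fin (n + 1) → Pt d | ∀ i, y i ∈ Λ}, remainderIntegrand d φ β a η y‖ ≤
        Real.exp (β * B * η.card) * (x ^ (n + 1) / (n + 1).factorial) := by
    rw [norm_mul, norm_div, norm_pow, Real.norm_eq_abs, RCLike.norm_natCast]
    calc |z| ^ (n + 1) / (n + 1).factorial *
          ‖∫ y in {y : Fin (n + 1) → Pt d | ∀ i, y i ∈ Λ}, remainderIntegrand d φ β a η y‖
        ≤ |z| ^ (n + 1) / (n + 1).factorial *
          (Real.exp (β * B * (η.card + (n + 1 : ℕ))) * volume.real Λ ^ (n + 1)) := by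
          gcongr
          exact norm_setIntegral_remainderIntegrand_le hβ.le hB hΛb hΛm hstab a
      _ = Real.exp (β * B * η.card) * (x ^ (n + 1) / (n + 1).factorial) := by
          rw [mul_add, Real.exp_add,
            show β * B * ((n + 1 : ℕ) : ℝ) = (n + 1 : ℕ) * (β * B) by ring, Real.exp_nat_mul]
          simp only [x, mul_pow]
          ring
  have hseries := tendsto_tsum_of_dominated_convergence
    (((summable_nat_add_iff 1).2 (Real.summable_pow_div_factorial x)).mul_left _)
    (fun n => by
      simpa using (tendsto_setIntegral_remainderIntegrand (m := n + 1) hd hA.cont hβ.le hB hΛb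
        hΛm hstab).const_mul (z ^ (n + 1) / (n + 1).factorial))
    (Eventually.of_forall hbound)
  have h := hfirst.add hseries
  rwa [tsum_zero, add_zero] at h

theorem remainder_tends_to_zero_general (d : ℕ) (hd : 1 ≤ d) (φ : ℝ → ℝ)
    (r₀ R φ₀ φ₁ ε₀ s : ℝ) (hA : AssumptionA d φ r₀ R φ₀ φ₁ ε₀ s) (hs : (d : ℝ) < s)
    (z β : ℝ) (hβ : 0 < β)
    (Λ : Set (Pt d)) (hΛb : Bornology.IsBounded Λ) (hΛm : MeasurableSet Λ)
    (η : Finset (Pt d)) :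
    Tendsto (fun a : ℝ =>
        z ^ η.card / ZΛ d φ z β Λ * corrInt d φ z β Λ η (fun γ => 1 - chiM d a γ))
      (𝓝[>] (0 : ℝ)) (𝓝 0) := by
  simpa using (tendsto_corrInt_one_sub_chiM hd hA hs z hβ hΛb hΛm η).const_mul
    (z ^ η.card / ZΛ d φ z β Λ)

/-- Lemma 4.1.  Under Assumption (A) with `s > d`, for fixed `z, β > 0`, bounded
measurable `Λ` and a finite configuration `η ⊂ Λ`, the remainder
`R^Λ(η;z,β,a) = (z^{|η|}/Z_Λ(z,β))·Σ_{n≥0}(z^n/n!)∫_{Λ^n} e^{-βU(η∪{y})}(1-χ₋^a(η∪{y})) dy`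
tends to `0` as `a → 0⁺`. -/
theorem remainder_tends_to_zero (d : ℕ) (hd : 1 ≤ d) (φ : ℝ → ℝ)
    (r₀ R φ₀ φ₁ ε₀ s : ℝ) (hA : AssumptionA d φ r₀ R φ₀ φ₁ ε₀ s) (hs : (d : ℝ) < s)
    (z β : ℝ) (hz : 0 < z) (hβ : 0 < β)
    (Λ : Set (Pt d)) (hΛb : Bornology.IsBounded Λ) (hΛm : MeasurableSet Λ)
    (η : Finset (Pt d)) (hη : ↑η ⊆ Λ) :
    Tendsto (fun a : ℝ =>
        z ^ η.card / ZΛ d φ z β Λ * corrInt d φ z β Λ η (fun γ => 1 - chiM d a γ))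
      (𝓝[>] (0 : ℝ)) (𝓝 0) :=
  remainder_tends_to_zero_general d hd φ r₀ R φ₀ φ₁ ε₀ s hA hs z β hβ Λ hΛb hΛm η
end
end

section
/- Suppose φ satisfies Assumption (A), that U(γ) ≥ −B|γ| for all finite configurations γ with some stability constant B ≥ 0, and that C(β) := ∫_{ℝ^d} |e^{−βφ(|x|)} − 1| dx < ∞. Then for every n ≥ 0 and every finite configuration η ⊂ ℝ^d with |η| > n + 1 one has (K̃^n δ)(η) = 0, and likewise ((K̃^(−))^n δ)(η) = 0 for every a > 0. -/
open MeasureTheory Filter Topology Set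
open scoped BigOperators ENNReal NNReal

noncomputable section

attribute [local instance] Classical.propDecidable

/-- `W({x};ζ)`. -/
def Wone (d : ℕ) (φ : ℝ → ℝ) (x : Pt d) (ζ : Finset (Pt d)) : ℝ := ∑ y ∈ ζ, φ (dist x y)

/-- `π_W(x;ζ)`. -/
def piW (d : ℕ) (φ : ℝ → ℝ) (B : ℝ) (x : Pt d) (ζ : Finset (Pt d)) : ℝ :=
  if -(2*B) ≤ Wone d φ x ζ then 1 else 0

/-- The Kirkwood–Salzburg operator `K̃`. -/
def KS (d : ℕ) (φ : ℝ → ℝ) (β B : ℝ) (ψ : Finset (Pt d) → ℝ) (η : Finset (Pt d)) : ℝ :=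
  if η.card = 1 then
    ∑ x ∈ η, ∑' k : ℕ, (1 / ((k+1).factorial : ℝ)) *
      ∫ y : Fin (k+1) → Pt d,
        (∏ i, (Real.exp (-β * φ (dist (y i) x)) - 1)) * ψ (confOf y)
  else if 2 ≤ η.card then
    ∑ x ∈ η,
      (piW d φ B x (η.erase x) / ∑ u ∈ η, piW d φ B u (η.erase u)) *
      Real.exp (-β * Wone d φ x (η.erase x)) *
      (ψ (η.erase x) + ∑' k : ℕ, (1 / ((k+1).factorial : ℝ)) *
        ∫ y : Fin (k+1) → Pt d,
          (∏ i, (Real.exp (-β * φ (dist (y i) x)) - 1)) * ψ (η.erase x ∪ confOf y))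
  else 0

/-- Ordered `n`-tuples of points lying in pairwise distinct cubes of `Δ̄_a`, none of which
contains a point of `η`.  Integrating a symmetric function over this region and dividing by `n!`
realizes the sum over all sets `{Δ₁,…,Δ_n}` of `n` pairwise distinct cubes containing no point
of `η` of `∫_{Δ₁}⋯∫_{Δ_n}`. -/
def goodReg (d : ℕ) (a : ℝ) (n : ℕ) (η : Finset (Pt d)) : Set (Fin n → Pt d) :=
  {y | Function.Injective (fun i => cubeIdx d a (y i)) ∧
       ∀ i, ∀ p ∈ η, cubeIdx d a (y i) ≠ cubeIdx d a p}

/-- `π_W` for the potential `φ̂` (which is `+∞` on pairs in one common cube). -/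
def piWHat (d : ℕ) (a : ℝ) (φ : ℝ → ℝ) (B : ℝ) (x : Pt d) (ζ : Finset (Pt d)) : ℝ :=
  if (∃ y ∈ ζ, cubeIdx d a x = cubeIdx d a y) ∨ -(2*B) ≤ Wone d φ x ζ then 1 else 0

/-- `e^{-β Ŵ({x};ζ)}` for the potential `φ̂`. -/
def expWHat (d : ℕ) (a : ℝ) (φ : ℝ → ℝ) (β : ℝ) (x : Pt d) (ζ : Finset (Pt d)) : ℝ :=
  if ∃ y ∈ ζ, cubeIdx d a x = cubeIdx d a y then 0 else Real.exp (-β * Wone d φ x ζ)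

/-- The quasi-lattice Kirkwood–Salzburg operator `K̃^{(-)}`. -/
def KSm (d : ℕ) (a : ℝ) (φ : ℝ → ℝ) (β B : ℝ) (ψ : Finset (Pt d) → ℝ) (η : Finset (Pt d)) : ℝ :=
  if η.card = 1 then
    ∑ x ∈ η, ∑' k : ℕ, (1 / ((k+1).factorial : ℝ)) *
      ∫ y in goodReg d a (k+1) η,
        (∏ i, (Real.exp (-β * φ (dist (y i) x)) - 1)) * ψ (confOf y)
  else if 2 ≤ η.card then
    ∑ x ∈ η,
      (piWHat d a φ B x (η.erase x) / ∑ u ∈ η, piWHat d a φ B u (η.erase u)) *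
      expWHat d a φ β x (η.erase x) *
      (ψ (η.erase x) + ∑' k : ℕ, (1 / ((k+1).factorial : ℝ)) *
        ∫ y in goodReg d a (k+1) η,
          (∏ i, (Real.exp (-β * φ (dist (y i) x)) - 1)) * ψ (η.erase x ∪ confOf y))
  else 0

/-- `δ(η) = 1` if `|η| = 1` and `0` otherwise. -/
def deltaFn (d : ℕ) (η : Finset (Pt d)) : ℝ := if η.card = 1 then 1 else 0

lemma step_KS (d : ℕ) (φ : ℝ → ℝ) (β B : ℝ) (m : ℕ) (ψ : Finset (Pt d) → ℝ)
    (hψ : ∀ γ : Finset (Pt d), m < γ.card → ψ γ = 0) :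
    ∀ η : Finset (Pt d), m + 1 < η.card → KS d φ β B ψ η = 0 := by
  intro η hη
  have h2 : 2 ≤ η.card := by omega
  have h1 : η.card ≠ 1 := by omega
  unfold KS
  rw [if_neg h1, if_pos h2]
  apply Finset.sum_eq_zero
  intro x hx
  have hcard : m < (η.erase x).card := by
    rw [Finset.card_erase_of_mem hx]; omega
  have hz1 : ψ (η.erase x) = 0 := hψ _ hcard
  have hz2 : ∀ γ : Finset (Pt d), η.erase x ⊆ γ → ψ γ = 0 := fun γ hγ =>
    hψ _ (lt_of_lt_of_le hcard (Finset.card_le_card hγ))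
  have hkey : (ψ (η.erase x) + ∑' k : ℕ, (1 / ((k+1).factorial : ℝ)) *
        ∫ y : Fin (k+1) → Pt d,
          (∏ i, (Real.exp (-β * φ (dist (y i) x)) - 1)) * ψ (η.erase x ∪ confOf y)) = 0 := by
    rw [hz1, zero_add]
    rw [show (0:ℝ) = ∑' _ : ℕ, (0:ℝ) from (tsum_zero).symm]
    apply tsum_congr
    intro k
    have hz : ∀ y : Fin (k+1) → Pt d,
        (∏ i, (Real.exp (-β * φ (dist (y i) x)) - 1)) * ψ (η.erase x ∪ confOf y) = 0 := by
      intro y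
      rw [hz2 _ Finset.subset_union_left, mul_zero]
    simp only [hz, integral_zero, mul_zero]
  rw [hkey, mul_zero]

lemma step_KSm (d : ℕ) (a : ℝ) (φ : ℝ → ℝ) (β B : ℝ) (m : ℕ) (ψ : Finset (Pt d) → ℝ)
    (hψ : ∀ γ : Finset (Pt d), m < γ.card → ψ γ = 0) :
    ∀ η : Finset (Pt d), m + 1 < η.card → KSm d a φ β B ψ η = 0 := by
  intro η hη
  have h2 : 2 ≤ η.card := by omega
  have h1 : η.card ≠ 1 := by omega
  unfold KSm
  rw [if_neg h1, if_pos h2]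
  apply Finset.sum_eq_zero
  intro x hx
  have hcard : m < (η.erase x).card := by
    rw [Finset.card_erase_of_mem hx]; omega
  have hz1 : ψ (η.erase x) = 0 := hψ _ hcard
  have hz2 : ∀ γ : Finset (Pt d), η.erase x ⊆ γ → ψ γ = 0 := fun γ hγ =>
    hψ _ (lt_of_lt_of_le hcard (Finset.card_le_card hγ))
  have hkey : (ψ (η.erase x) + ∑' k : ℕ, (1 / ((k+1).factorial : ℝ)) *
        ∫ y in goodReg d a (k+1) η,
          (∏ i, (Real.exp (-β * φ (dist (y i) x)) - 1)) * ψ (η.erase x ∪ confOf y)) = 0 := by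
    rw [hz1, zero_add]
    rw [show (0:ℝ) = ∑' _ : ℕ, (0:ℝ) from (tsum_zero).symm]
    apply tsum_congr
    intro k
    have hz : ∀ y : Fin (k+1) → Pt d,
        (∏ i, (Real.exp (-β * φ (dist (y i) x)) - 1)) * ψ (η.erase x ∪ confOf y) = 0 := by
      intro y
      rw [hz2 _ Finset.subset_union_left, mul_zero]
    simp only [hz, integral_zero, mul_zero]
  rw [hkey, mul_zero]

/-- Under Assumption (A), stability with constant `B ≥ 0` and `C(β) < ∞`, for
every `n ≥ 0` and every finite configuration `η` with `|η| > n + 1` one has `(K̃ⁿδ)(η) = 0`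
and `((K̃^{(-)})ⁿδ)(η) = 0` for every `a > 0`. -/
theorem KS_iterates_vanish (d : ℕ) (hd : 1 ≤ d) (φ : ℝ → ℝ)
    (r₀ R φ₀ φ₁ ε₀ s : ℝ) (hA : AssumptionA d φ r₀ R φ₀ φ₁ ε₀ s)
    (β B : ℝ) (hβ : 0 < β) (hB : 0 ≤ B)
    (hstab : ∀ γ : Finset (Pt d), -(B * γ.card) ≤ energy d φ γ)
    (hC : Integrable (fun x : Pt d => Real.exp (-β * φ ‖x‖) - 1)) :
    ∀ n : ℕ, ∀ η : Finset (Pt d), n + 1 < η.card →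
      (KS d φ β B)^[n] (deltaFn d) η = 0 ∧
      ∀ a : ℝ, 0 < a → (KSm d a φ β B)^[n] (deltaFn d) η = 0 := by
  intro n
  induction n with
  | zero =>
    intro η hη
    have h1 : η.card ≠ 1 := by omega
    refine ⟨?_, fun a _ => ?_⟩ <;>
      simp [deltaFn, h1]
  | succ n ih =>
    intro η hη
    constructor
    · rw [Function.iterate_succ_apply']
      exact step_KS d φ β B (n + 1) _ (fun γ hγ => (ih γ hγ).1) η (by omega)
    · intro a ha
      rw [Function.iterate_succ_apply']
      exact step_KSm d a φ β B (n + 1) _ (fun γ hγ => (ih γ hγ).2 a ha) η (by omega)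
end
end
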